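/- Let F : F_2^n → F_2^n be a vectorial Boolean function of algebraic degree 2 or 3 (so every second-order derivative of every component is constant or has degree 1). Then L_4(F) = 2^{3n}(2^n − 1) + 2^{2n}·M(F), where M(F) = Σ_{λ≠0} Σ_{b≠0} M_b(F_λ) and M_b(g) = |{c : D_c D_b g ≡ 0}| − |{c : D_c D_b g ≡ 1}|. -/
import Mathlib


open Finset

/-- Hamming weight: number of inputs where `f` takes value 1. -/
def wt {α : Type*} [Fintype α] (f : α → ZMod 2) : ℕ :=
  (Finset.univ.filter fun x => f x = 1).card

/-- Fourier coefficient `𝓕(f) = ∑ x, (-1)^{f x}`. -/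
def Fcal {α : Type*} [Fintype α] (f : α → ZMod 2) : ℤ :=
  ∑ x, (-1 : ℤ) ^ (f x).val

/-- `f` is balanced: its weight is half the domain size. -/
def IsBalanced {α : Type*} [Fintype α] (f : α → ZMod 2) : Prop :=
  2 * wt f = Fintype.card α

/-- Dot product over `F_2`. -/
def dotp {n : ℕ} (a x : Fin n → ZMod 2) : ZMod 2 := ∑ i, a i * x i

/-- Walsh transform of `f` at `a`. -/
def walsh {n : ℕ} (f : (Fin n → ZMod 2) → ZMod 2) (a : Fin n → ZMod 2) : ℤ :=
  ∑ x, (-1 : ℤ) ^ (f x + dotp a x).val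

/-- First-order derivative `D_a f`. -/
def Dd {n : ℕ} (a : Fin n → ZMod 2) (f : (Fin n → ZMod 2) → ZMod 2) :
    (Fin n → ZMod 2) → ZMod 2 := fun x => f (x + a) + f x

/-- Second-order derivative `D_b D_a f`. -/
def DD {n : ℕ} (b a : Fin n → ZMod 2) (f : (Fin n → ZMod 2) → ZMod 2) :
    (Fin n → ZMod 2) → ZMod 2 :=
  fun x => f x + f (x + b) + f (x + a) + f (x + a + b)

/-- `M_a(f) = |Z_a(f)| - |U_a(f)|`. -/
def Mcal {n : ℕ} (a : Fin n → ZMod 2) (f : (Fin n → ZMod 2) → ZMod 2) : ℤ :=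
  ((Finset.univ.filter fun b : Fin n → ZMod 2 => ∀ x, DD b a f x = 0).card : ℤ) -
    ((Finset.univ.filter fun b : Fin n → ZMod 2 => ∀ x, DD b a f x = 1).card : ℤ)

/-- `f` has algebraic degree at most `d` (all ANF coefficients of monomials of
degree `> d` vanish). -/
def degLe {n : ℕ} (f : (Fin n → ZMod 2) → ZMod 2) (d : ℕ) : Prop :=
  ∀ S : Finset (Fin n), d < S.card →
    ∑ x ∈ Finset.univ.filter (fun x : Fin n → ZMod 2 => ∀ i, x i = 1 → i ∈ S), f x = 0

/-- Nonlinearity: minimal Hamming distance to an affine function. -/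
noncomputable def nonlin {n : ℕ} (f : (Fin n → ZMod 2) → ZMod 2) : ℕ :=
  sInf { d | ∃ (v : Fin n → ZMod 2) (c : ZMod 2), d = wt (fun x => f x + dotp v x + c) }

/-- Component function `F_λ = λ · F`. -/
def compF {n : ℕ} (F : (Fin n → ZMod 2) → (Fin n → ZMod 2)) (lam : Fin n → ZMod 2) :
    (Fin n → ZMod 2) → ZMod 2 := fun x => dotp lam (F x)

/-- `F` is almost perfect nonlinear. -/
def IsAPN {n : ℕ} (F : (Fin n → ZMod 2) → (Fin n → ZMod 2)) : Prop :=
  ∀ a : Fin n → ZMod 2, a ≠ 0 → ∀ b : Fin n → ZMod 2,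
    (Finset.univ.filter fun x => F (x + a) + F x = b).card ≤ 2

/-- Fourth power moment of the Walsh transform. -/
def L4 {n : ℕ} (F : (Fin n → ZMod 2) → (Fin n → ZMod 2)) : ℤ :=
  ∑ lam ∈ Finset.univ.filter (fun lam : Fin n → ZMod 2 => lam ≠ 0),
    ∑ a, (walsh (compF F lam) a) ^ 4

def chi (a : ZMod 2) : ℤ := (-1) ^ a.val

lemma chi_add : ∀ a b : ZMod 2, chi (a + b) = chi a * chi b := by decide
lemma chi_zero : chi 0 = 1 := rfl
lemma chi_one : chi 1 = -1 := rfl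

lemma z2_add_self : ∀ a : ZMod 2, a + a = 0 := by decide
lemma v_add_self {n : ℕ} (x : Fin n → ZMod 2) : x + x = 0 := funext fun i => z2_add_self _

lemma dotp_add_right {n : ℕ} (v x y : Fin n → ZMod 2) :
    dotp v (x + y) = dotp v x + dotp v y := by
  simp [dotp, mul_add, Finset.sum_add_distrib]

lemma dotp_add_left {n : ℕ} (v w x : Fin n → ZMod 2) :
    dotp (v + w) x = dotp v x + dotp w x := by
  simp [dotp, add_mul, Finset.sum_add_distrib]

lemma dotp_comm {n : ℕ} (a x : Fin n → ZMod 2) : dotp a x = dotp x a := by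
  simp [dotp, mul_comm]

lemma dotp_zero_left {n : ℕ} (x : Fin n → ZMod 2) : dotp 0 x = 0 := by simp [dotp]

def ee {n : ℕ} (i : Fin n) : Fin n → ZMod 2 := fun j => if j = i then 1 else 0

lemma dotp_ee {n : ℕ} (i : Fin n) (x : Fin n → ZMod 2) : dotp (ee i) x = x i := by
  simp [dotp, ee, ite_mul, Finset.sum_ite_eq]

lemma dotp_ee' {n : ℕ} (v : Fin n → ZMod 2) (i : Fin n) : dotp v (ee i) = v i := by
  rw [dotp_comm, dotp_ee]

lemma sum_chi_dotp {n : ℕ} (v : Fin n → ZMod 2) (hv : v ≠ 0) :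
    ∑ x, chi (dotp v x) = 0 := by
  have : ∃ i, v i ≠ 0 := by
    by_contra h
    push_neg at h
    exact hv (funext h)
  obtain ⟨i, hi⟩ := this
  have hvi : v i = 1 := by
    revert hi; generalize v i = a; revert a; decide
  have key : ∑ x, chi (dotp v x) = ∑ x, chi (dotp v (x + ee i)) :=
    (Fintype.sum_bijective (· + ee i)
      ((Equiv.addRight (ee i)).bijective) _ _ (fun x => rfl)).symm
  have : ∑ x, chi (dotp v x) = - ∑ x, chi (dotp v x) := by
    nth_rewrite 1 [key]
    rw [← Finset.sum_neg_distrib]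
    refine Finset.sum_congr rfl fun x _ => ?_
    rw [dotp_add_right, chi_add, dotp_ee', hvi, chi_one]
    ring
  linarith

lemma sum_chi_dotp_right {n : ℕ} (s : Fin n → ZMod 2) (hs : s ≠ 0) :
    ∑ a, chi (dotp a s) = 0 := by
  simp_rw [dotp_comm _ s]
  exact sum_chi_dotp s hs

lemma card_V (n : ℕ) : Fintype.card (Fin n → ZMod 2) = 2 ^ n := by
  simp

lemma fourier2 {n : ℕ} (s : Fin n → ZMod 2) :
    ∑ a, chi (dotp a s) = if s = 0 then (2 : ℤ) ^ n else 0 := by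
  split_ifs with h
  · subst h
    have : ∀ a : Fin n → ZMod 2, chi (dotp a 0) = 1 := by
      intro a; rw [dotp_comm, dotp_zero_left, chi_zero]
    rw [Finset.sum_congr rfl fun a _ => this a, Finset.sum_const, Finset.card_univ, card_V]
    simp
  · exact sum_chi_dotp_right s h
def mono {n : ℕ} (S : Finset (Fin n)) (x : Fin n → ZMod 2) : ZMod 2 := ∏ i ∈ S, x i

def coeff {n : ℕ} (f : (Fin n → ZMod 2) → ZMod 2) (S : Finset (Fin n)) : ZMod 2 :=
  ∑ x ∈ Finset.univ.filter (fun x : Fin n → ZMod 2 => ∀ i, x i = 1 → i ∈ S), f x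

def supp {n : ℕ} (x : Fin n → ZMod 2) : Finset (Fin n) :=
  Finset.univ.filter (fun i => x i = 1)

lemma z2_ne_one (a : ZMod 2) (h : a ≠ 1) : a = 0 := by
  revert h; generalize a = b; revert b; decide

lemma mono_eq_ite {n : ℕ} (S : Finset (Fin n)) (x : Fin n → ZMod 2) :
    mono S x = if S ⊆ supp x then 1 else 0 := by
  split_ifs with h
  · exact Finset.prod_eq_one fun i hi => by
      have := h hi; simp [supp] at this; exact this
  · obtain ⟨i, hiS, hix⟩ : ∃ i ∈ S, i ∉ supp x := by
      by_contra hc; push_neg at hc; exact h hc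
    have hx0 : x i = 0 := by
      apply z2_ne_one; intro h1; exact hix (by simp [supp, h1])
    exact Finset.prod_eq_zero hiS hx0

lemma supp_eq_iff {n : ℕ} (x y : Fin n → ZMod 2) : supp x = supp y ↔ x = y := by
  constructor
  · intro h
    funext i
    have : (x i = 1) ↔ (y i = 1) := by
      constructor <;> intro h1
      · have : i ∈ supp x := by simp [supp, h1]
        rw [h] at this; simpa [supp] using this
      · have : i ∈ supp y := by simp [supp, h1]
        rw [← h] at this; simpa [supp] using this
    by_cases hx : x i = 1
    · rw [hx, (this.mp hx).symm]
    · rw [z2_ne_one _ hx, z2_ne_one _ (fun hy => hx (this.mpr hy))]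
  · rintro rfl; rfl

lemma anf {n : ℕ} (f : (Fin n → ZMod 2) → ZMod 2) (x : Fin n → ZMod 2) :
    f x = ∑ S : Finset (Fin n), coeff f S * mono S x := by
  have hcoeff : ∀ S, coeff f S = ∑ y, if supp y ⊆ S then f y else 0 := by
    intro S
    rw [coeff, Finset.sum_filter]
    refine Finset.sum_congr rfl fun y _ => ?_
    congr 1
    simp only [supp, eq_iff_iff]
    constructor
    · intro h i hi
      simp only [mem_filter, mem_univ, true_and] at hi
      exact h i hi
    · intro h i hi
      exact h (by simp [mem_filter, hi])
  calc f x = ∑ y, f y * (if y = x then 1 else 0) := by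
        simp only [mul_ite, mul_one, mul_zero, Finset.sum_ite_eq', Finset.mem_univ, if_true]
    _ = ∑ S : Finset (Fin n), coeff f S * mono S x := by
        simp_rw [hcoeff, Finset.sum_mul, mono_eq_ite]
        rw [Finset.sum_comm]
        refine Finset.sum_congr rfl fun y _ => ?_
        have : ∀ S : Finset (Fin n), (if supp y ⊆ S then f y else 0) * (if S ⊆ supp x then 1 else 0)
            = f y * (if S ∈ Finset.Icc (supp y) (supp x) then 1 else 0) := by
          intro S
          simp only [Finset.mem_Icc]
          split_ifs with h1 h2 h3 h3 <;> simp_all <;> ring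
        rw [Finset.sum_congr rfl fun S _ => this S, ← Finset.mul_sum]
        congr 1
        rw [Finset.sum_ite_mem, Finset.univ_inter, Finset.sum_const, nsmul_eq_mul, mul_one]
        by_cases hsub : supp y ⊆ supp x
        · rw [Finset.card_Icc_finset hsub]
          by_cases heq : y = x
          · subst heq
            simp
          · have hne : supp y ≠ supp x := fun h => heq ((supp_eq_iff _ _).mp h)
            have hlt : (supp y).card < (supp x).card :=
              Finset.card_lt_card (lt_of_le_of_ne hsub hne)
            have : (supp x).card - (supp y).card ≠ 0 := by omega
            obtain ⟨k, hk⟩ := Nat.exists_eq_succ_of_ne_zero this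
            rw [hk, if_neg heq]
            have h2 : (2 : ZMod 2) = 0 := by decide
            push_cast
            simp [pow_succ, h2]
        · have : Finset.Icc (supp y) (supp x) = ∅ := by
            rw [Finset.Icc_eq_empty]; exact fun h => hsub h
          rw [this]
          have : y ≠ x := fun h => hsub (by rw [h])
          simp [this]
def IsAff {n : ℕ} (h : (Fin n → ZMod 2) → ZMod 2) : Prop :=
  ∃ v c0, ∀ x, h x = dotp v x + c0

lemma aff_const {n : ℕ} (k : ZMod 2) : IsAff (fun _ : Fin n → ZMod 2 => k) :=
  ⟨0, k, fun x => by rw [dotp_zero_left, zero_add]⟩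

lemma aff_addf {n : ℕ} {h1 h2 : (Fin n → ZMod 2) → ZMod 2} (a1 : IsAff h1) (a2 : IsAff h2) :
    IsAff (fun x => h1 x + h2 x) := by
  obtain ⟨v1, c1, hv1⟩ := a1
  obtain ⟨v2, c2, hv2⟩ := a2
  exact ⟨v1 + v2, c1 + c2, fun x => by simp only []; rw [hv1, hv2, dotp_add_left]; ring⟩

lemma aff_coord {n : ℕ} (i : Fin n) : IsAff (fun x : Fin n → ZMod 2 => x i) :=
  ⟨ee i, 0, fun x => by rw [dotp_ee, add_zero]⟩

lemma z2_cases (k : ZMod 2) : k = 0 ∨ k = 1 := by revert k; decide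

lemma aff_smul {n : ℕ} (k : ZMod 2) {h : (Fin n → ZMod 2) → ZMod 2} (a : IsAff h) :
    IsAff (fun x => k * h x) := by
  rcases z2_cases k with rfl | rfl
  · simpa using aff_const (0 : ZMod 2)
  · simpa using a

lemma aff_sum {n : ℕ} {ι : Type*} (s : Finset ι) (g : ι → (Fin n → ZMod 2) → ZMod 2)
    (h : ∀ i ∈ s, IsAff (g i)) : IsAff (fun x => ∑ i ∈ s, g i x) := by
  induction s using Finset.cons_induction with
  | empty => simpa using aff_const (0 : ZMod 2)
  | cons i s hi ih =>
    simp only [Finset.sum_cons]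
    exact aff_addf (h i (Finset.mem_cons_self i s))
      (ih fun j hj => h j (Finset.mem_cons_of_mem hj))

lemma mono_add {n : ℕ} (S : Finset (Fin n)) (x u : Fin n → ZMod 2) :
    mono S (x + u) = ∑ T ∈ S.powerset, mono T x * mono (S \ T) u := by
  simpa [mono] using Finset.prod_add (fun i => x i) (fun i => u i) S

/-- DD of a monomial expanded -/
lemma DD_mono {n : ℕ} (b c : Fin n → ZMod 2) (S : Finset (Fin n)) (x : Fin n → ZMod 2) :
    DD c b (mono S) x = ∑ T ∈ S.powerset,
      mono T x * (mono (S \ T) 0 + mono (S \ T) c + mono (S \ T) b + mono (S \ T) (b + c)) := by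
  have h0 : mono S x = mono S (x + 0) := by rw [add_zero]
  rw [DD, h0, show x + b + c = x + (b + c) by ring]
  rw [mono_add, mono_add, mono_add, mono_add]
  simp only [← Finset.sum_add_distrib, mul_add]

lemma K_zero {n : ℕ} (b c : Fin n → ZMod 2) (R : Finset (Fin n)) (hR : R.card ≤ 1) :
    mono R 0 + mono R c + mono R b + mono R (b + c) = 0 := by
  interval_cases h : R.card
  · rw [Finset.card_eq_zero] at h
    subst h
    simp only [mono, Finset.prod_empty]
    decide
  · rw [Finset.card_eq_one] at h
    obtain ⟨i, rfl⟩ := h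
    simp only [mono, Finset.prod_singleton, Pi.add_apply, Pi.zero_apply]
    have : ∀ a b : ZMod 2, 0 + a + b + (b + a) = 0 := by decide
    exact this _ _
lemma Fcal_eq_chi {α : Type*} [Fintype α] (f : α → ZMod 2) : Fcal f = ∑ x, chi (f x) := rfl

lemma IsAff_DD {n : ℕ} (g : (Fin n → ZMod 2) → ZMod 2) (hg : degLe g 3)
    (b c : Fin n → ZMod 2) : IsAff (DD c b g) := by
  have hrepr : DD c b g = fun x => ∑ S : Finset (Fin n), coeff g S * DD c b (mono S) x := by
    funext x
    show g x + g (x + c) + g (x + b) + g (x + b + c) = _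
    rw [anf g x, anf g (x + c), anf g (x + b), anf g (x + b + c)]
    rw [← Finset.sum_add_distrib, ← Finset.sum_add_distrib, ← Finset.sum_add_distrib]
    refine Finset.sum_congr rfl fun S _ => ?_
    show _ = coeff g S * (mono S x + mono S (x + c) + mono S (x + b) + mono S (x + b + c))
    ring
  rw [hrepr]
  apply aff_sum
  intro S _
  by_cases hS : 3 < S.card
  · have h0 : coeff g S = 0 := hg S hS
    simp only [h0, zero_mul]
    exact aff_const 0
  · apply aff_smul
    have hDDm : DD c b (mono S) = fun x => ∑ T ∈ S.powerset,
        mono T x * (mono (S \ T) 0 + mono (S \ T) c + mono (S \ T) b + mono (S \ T) (b + c)) :=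
      funext (DD_mono b c S)
    rw [hDDm]
    apply aff_sum
    intro T hT
    by_cases h1 : T.card ≤ 1
    · rcases Nat.le_one_iff_eq_zero_or_eq_one.mp h1 with h0 | h0
      · rw [Finset.card_eq_zero] at h0
        subst h0
        simp only [mono, Finset.prod_empty, one_mul]
        exact aff_const _
      · rw [Finset.card_eq_one] at h0
        obtain ⟨i, rfl⟩ := h0
        simp only [mono, Finset.prod_singleton]
        obtain ⟨v, c0, hv⟩ := aff_smul (mono (S \ {i}) 0 + mono (S \ {i}) c
          + mono (S \ {i}) b + mono (S \ {i}) (b + c)) (aff_coord i)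
        exact ⟨v, c0, fun x => by rw [← hv x]; simp only [mono]; ring⟩
    · have hsub : T ⊆ S := Finset.mem_powerset.mp hT
      have hcard : (S \ T).card ≤ 1 := by
        rw [Finset.card_sdiff_of_subset hsub]
        have := Finset.card_le_card hsub
        omega
      rw [K_zero b c _ hcard]
      simp only [mul_zero]
      exact aff_const 0

lemma tri {n : ℕ} (h : (Fin n → ZMod 2) → ZMod 2) (ha : IsAff h) :
    (∀ x, h x = 0) ∨ (∀ x, h x = 1) ∨ Fcal h = 0 := by
  obtain ⟨v, c0, hv⟩ := ha
  by_cases hv0 : v = 0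
  · subst hv0
    rcases z2_cases c0 with rfl | rfl
    · left; intro x; rw [hv, dotp_zero_left, add_zero]
    · right; left; intro x; rw [hv, dotp_zero_left, zero_add]
  · right; right
    have : Fcal h = ∑ x, chi (dotp v x) * chi c0 := by
      rw [Fcal_eq_chi]
      refine Finset.sum_congr rfl fun x _ => ?_
      rw [hv, chi_add]
    rw [this, ← Finset.sum_mul, sum_chi_dotp v hv0, zero_mul]
lemma sum_Fcal_eq {n : ℕ} (g : (Fin n → ZMod 2) → ZMod 2) (hg : degLe g 3)
    (b : Fin n → ZMod 2) : ∑ c, Fcal (DD c b g) = 2 ^ n * Mcal b g := by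
  have hpt : ∀ c, Fcal (DD c b g) =
      (if (∀ x, DD c b g x = 0) then ((2:ℤ)^n) else 0) +
      (if (∀ x, DD c b g x = 1) then (-(2:ℤ)^n) else 0) := by
    intro c
    by_cases h0 : ∀ x, DD c b g x = 0
    · have h1 : ¬ ∀ x, DD c b g x = 1 := by
        intro h1
        have := (h0 0).symm.trans (h1 0)
        exact absurd this (by decide)
      rw [if_pos h0, if_neg h1, add_zero, Fcal_eq_chi]
      have : ∀ x, chi (DD c b g x) = 1 := fun x => by rw [h0 x, chi_zero]
      rw [Finset.sum_congr rfl fun x _ => this x, Finset.sum_const, Finset.card_univ, card_V]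
      simp
    · rw [if_neg h0, zero_add]
      by_cases h1 : ∀ x, DD c b g x = 1
      · rw [if_pos h1, Fcal_eq_chi]
        have : ∀ x, chi (DD c b g x) = -1 := fun x => by rw [h1 x, chi_one]
        rw [Finset.sum_congr rfl fun x _ => this x, Finset.sum_const, Finset.card_univ, card_V]
        simp
      · rw [if_neg h1]
        rcases tri _ (IsAff_DD g hg b c) with h | h | h
        · exact absurd h h0
        · exact absurd h h1
        · exact h
  rw [Finset.sum_congr rfl fun c _ => hpt c, Finset.sum_add_distrib]
  simp only [Finset.sum_ite, Finset.sum_const, Finset.sum_const_zero, add_zero,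
    smul_eq_mul, nsmul_eq_mul]
  rw [Mcal]
  push_cast
  ring

lemma Mcal_zero {n : ℕ} (g : (Fin n → ZMod 2) → ZMod 2) : Mcal 0 g = 2 ^ n := by
  have hZ : (Finset.univ.filter fun b : Fin n → ZMod 2 => ∀ x, DD b 0 g x = 0) = Finset.univ := by
    refine Finset.filter_true_of_mem fun b _ => fun x => ?_
    show g x + g (x + b) + g (x + 0) + g (x + 0 + b) = 0
    rw [add_zero]
    have : ∀ u v : ZMod 2, u + v + u + v = 0 := by decide
    exact this _ _
  have hU : (Finset.univ.filter fun b : Fin n → ZMod 2 => ∀ x, DD b 0 g x = 1) = ∅ := by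
    refine Finset.filter_false_of_mem fun b _ => ?_
    intro h
    have h0 : DD b 0 g 0 = 0 := by
      show g 0 + g (0 + b) + g (0 + 0) + g (0 + 0 + b) = 0
      rw [add_zero]
      have : ∀ u v : ZMod 2, u + v + u + v = 0 := by decide
      exact this _ _
    have := h0.symm.trans (h 0)
    exact absurd this (by decide)
  rw [Mcal, hZ, hU, Finset.card_univ, card_V, Finset.card_empty]
  push_cast
  ring

lemma v_neg {n : ℕ} (x : Fin n → ZMod 2) : -x = x := by
  funext i
  show -(x i) = x i
  revert x
  intro x
  have : ∀ a : ZMod 2, -a = a := by decide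
  exact this _

lemma walsh_pow4 {n : ℕ} (g : (Fin n → ZMod 2) → ZMod 2) :
    ∑ a, (walsh g a) ^ 4 = 2 ^ n * ∑ b, ∑ c, Fcal (DD c b g) := by
  have expand : ∀ a, (walsh g a) ^ 4 = ∑ x, ∑ y, ∑ z, ∑ w,
      chi (g x + g y + g z + g w) * chi (dotp a (x + y + z + w)) := by
    intro a
    have hw : walsh g a = ∑ x, chi (g x + dotp a x) := rfl
    rw [hw, show (∑ x, chi (g x + dotp a x)) ^ 4 =
        (∑ x, chi (g x + dotp a x)) * (∑ y, chi (g y + dotp a y)) *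
        (∑ z, chi (g z + dotp a z)) * (∑ w, chi (g w + dotp a w)) by ring]
    simp only [Finset.sum_mul, Finset.mul_sum]
    refine Finset.sum_congr rfl fun x _ => Finset.sum_congr rfl fun y _ =>
      Finset.sum_congr rfl fun z _ => Finset.sum_congr rfl fun w _ => ?_
    rw [← chi_add, ← chi_add, ← chi_add, ← chi_add,
      dotp_add_right, dotp_add_right, dotp_add_right]
    congr 1
    ring
  calc ∑ a, (walsh g a) ^ 4
      = ∑ a, ∑ x, ∑ y, ∑ z, ∑ w,
          chi (g x + g y + g z + g w) * chi (dotp a (x + y + z + w)) :=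
        Finset.sum_congr rfl fun a _ => expand a
    _ = ∑ x, ∑ y, ∑ z, ∑ w, chi (g x + g y + g z + g w) * ∑ a, chi (dotp a (x + y + z + w)) := by
        rw [Finset.sum_comm]
        refine Finset.sum_congr rfl fun x _ => ?_
        rw [Finset.sum_comm]
        refine Finset.sum_congr rfl fun y _ => ?_
        rw [Finset.sum_comm]
        refine Finset.sum_congr rfl fun z _ => ?_
        rw [Finset.sum_comm]
        refine Finset.sum_congr rfl fun w _ => ?_
        rw [← Finset.mul_sum]
    _ = ∑ x, ∑ y, ∑ z, (2:ℤ)^n * chi (g x + g y + g z + g (x + y + z)) := by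
        refine Finset.sum_congr rfl fun x _ => Finset.sum_congr rfl fun y _ =>
          Finset.sum_congr rfl fun z _ => ?_
        have hcond : ∀ w : Fin n → ZMod 2, (x + y + z + w = 0) ↔ (w = x + y + z) := by
          intro w
          rw [add_eq_zero_iff_eq_neg, v_neg]
          exact eq_comm
        calc ∑ w, chi (g x + g y + g z + g w) * ∑ a, chi (dotp a (x + y + z + w))
            = ∑ w, chi (g x + g y + g z + g w) * (if w = x + y + z then (2:ℤ)^n else 0) := by
              refine Finset.sum_congr rfl fun w _ => ?_
              rw [fourier2]
              congr 1
              rw [if_congr (hcond w) rfl rfl]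
          _ = (2:ℤ)^n * chi (g x + g y + g z + g (x + y + z)) := by
              simp only [mul_ite, mul_zero, Finset.sum_ite_eq', Finset.mem_univ, if_true]
              ring
    _ = 2 ^ n * ∑ b, ∑ c, Fcal (DD c b g) := by
        rw [Finset.mul_sum]
        have hx : ∀ x : Fin n → ZMod 2,
            ∑ y, ∑ z, (2:ℤ)^n * chi (g x + g y + g z + g (x + y + z)) =
            ∑ b, ∑ c, (2:ℤ)^n * chi (g x + g (x + b) + g (x + c) + g (x + b + c)) := by
          intro x
          have eq1 : ∀ (h : (Fin n → ZMod 2) → ℤ), ∑ y, h y = ∑ b, h (x + b) := fun h =>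
            (Fintype.sum_bijective (x + ·) (Equiv.addLeft x).bijective _ _ (fun b => rfl)).symm
          rw [eq1]
          refine Finset.sum_congr rfl fun b _ => ?_
          rw [eq1]
          refine Finset.sum_congr rfl fun c _ => ?_
          have h1 : x + (x + b) + (x + c) = x + b + c := by
            have h2 : x + (x + b) + (x + c) = (x + x) + (x + b + c) := by abel
            rw [h2, v_add_self, zero_add]
          rw [h1]
        rw [Finset.sum_congr rfl fun x _ => hx x, Finset.sum_comm]
        refine Finset.sum_congr rfl fun b _ => ?_
        rw [Finset.mul_sum, Finset.sum_comm]
        refine Finset.sum_congr rfl fun c _ => ?_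
        rw [Fcal_eq_chi, Finset.mul_sum]
        refine Finset.sum_congr rfl fun x _ => ?_
        have hDD : DD c b g x = g x + g (x + b) + g (x + c) + g (x + b + c) := by
          show g x + g (x + c) + g (x + b) + g (x + b + c) = _
          ring
        rw [hDD]

theorem stmt17 (n : ℕ) (F : (Fin n → ZMod 2) → (Fin n → ZMod 2))
    (hdeg : (∀ lam : Fin n → ZMod 2, lam ≠ 0 → degLe (compF F lam) 3) ∧
      ¬ (∀ lam : Fin n → ZMod 2, lam ≠ 0 → degLe (compF F lam) 1)) :
    L4 F = 2 ^ (3 * n) * ((2 : ℤ) ^ n - 1) + 2 ^ (2 * n) *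
      ∑ lam ∈ Finset.univ.filter (fun lam : Fin n → ZMod 2 => lam ≠ 0),
        ∑ b ∈ Finset.univ.filter (fun b : Fin n → ZMod 2 => b ≠ 0),
          Mcal b (compF F lam) := by
  obtain ⟨hdeg3, -⟩ := hdeg
  have p3 : (2:ℤ) ^ (3 * n) = 2 ^ n * 2 ^ n * 2 ^ n := by
    rw [show 3 * n = n + n + n by ring, pow_add, pow_add]
  have p2 : (2:ℤ) ^ (2 * n) = 2 ^ n * 2 ^ n := by
    rw [show 2 * n = n + n by ring, pow_add]
  have key : ∀ lam : Fin n → ZMod 2, lam ≠ 0 →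
      ∑ a, (walsh (compF F lam) a) ^ 4 =
      2 ^ (3 * n) + 2 ^ (2 * n) *
        ∑ b ∈ Finset.univ.filter (fun b : Fin n → ZMod 2 => b ≠ 0), Mcal b (compF F lam) := by
    intro lam hlam
    rw [walsh_pow4, Finset.sum_congr rfl fun b _ => sum_Fcal_eq _ (hdeg3 lam hlam) b,
      ← Finset.mul_sum]
    have hsplit : ∑ b, Mcal b (compF F lam) = 2 ^ n +
        ∑ b ∈ Finset.univ.filter (fun b : Fin n → ZMod 2 => b ≠ 0), Mcal b (compF F lam) := by
      rw [← Finset.sum_filter_add_sum_filter_not Finset.univ (fun b => b = 0)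
        (fun b => Mcal b (compF F lam))]
      congr 1
      · have : (Finset.univ.filter (fun b : Fin n → ZMod 2 => b = 0)) = {0} := by
          ext b; simp
        rw [this, Finset.sum_singleton, Mcal_zero]
    rw [hsplit, p3, p2]
    ring
  rw [L4, Finset.sum_congr rfl fun lam hlam => key lam (Finset.mem_filter.mp hlam).2,
    Finset.sum_add_distrib, Finset.sum_const, ← Finset.mul_sum]
  have hcard : (Finset.univ.filter (fun lam : Fin n → ZMod 2 => lam ≠ 0)).card = 2 ^ n - 1 := by
    rw [Finset.filter_ne' Finset.univ (0 : Fin n → ZMod 2),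
      Finset.card_erase_of_mem (Finset.mem_univ _), Finset.card_univ, card_V]
  rw [hcard, nsmul_eq_mul]
  have h1 : ((2 ^ n - 1 : ℕ) : ℤ) = 2 ^ n - 1 := by
    push_cast [Nat.one_le_two_pow]
    ring
  rw [h1]
  ring
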